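/- Suppose in addition that φ is a faithful state on A (φ(1) = 1, φ(a⋆ a) ≥ 0 for all a, and φ(a⋆ a) = 0 implies a = 0). Then the pair (φ, (W_k, V¹_{l,r}, V²_{p,s} : k ∈ ℕ, (l,r) ∈ ℕ × ℕ_{≥1}, (p,s) ∈ ℕ × ℕ_{≥1})) defines an orthogonal filtration on A: (i) W_0 = ℂ·1; (ii) each of the subspaces W_k, V¹_{l,r}, V²_{p,s} is finite-dimensional; (iii) for any two distinct subspaces U ≠ U′ from this family and any a ∈ U, b ∈ U′, one has φ(a⋆ b) = 0; (iv) the linear span of the union of all these subspaces is dense in A. -/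
import Mathlib


open scoped ComplexOrder

noncomputable section

/-- The product `S_{μ₁} ⋯ S_{μ_p}` along a word `μ` (with `S_μ = 1` for the empty word). -/
def wordProd {A : Type*} [Monoid A] {n : ℕ} (S : Fin n → A) (μ : List (Fin n)) : A :=
  (μ.map S).prod

/-- `B_{r,s} = Span { S_μ S_ν⋆ : |μ| = r, |ν| = s }`;  `F_k = B_{k,k}`. -/
def Bspan {A : Type*} [Ring A] [Algebra ℂ A] [StarRing A] {n : ℕ}
    (S : Fin n → A) (r s : ℕ) : Submodule ℂ A :=
  Submodule.span ℂ
    {a | ∃ μ ν : List (Fin n), μ.length = r ∧ ν.length = s ∧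
        a = wordProd S μ * star (wordProd S ν)}

/-- `W_0 = ℂ·1` and, for `k ≥ 1`,
`W_k = {x ∈ F_k : φ(y⋆ x) = 0 for all y ∈ F_{k-1}}`. -/
def Wsub {A : Type*} [NormedRing A] [NormedAlgebra ℂ A] [StarRing A] {n : ℕ}
    (φ : A →L[ℂ] ℂ) (S : Fin n → A) : ℕ → Submodule ℂ A
  | 0 => Submodule.span ℂ {(1 : A)}
  | (k + 1) =>
      Bspan S (k + 1) (k + 1) ⊓
        ⨅ y ∈ Bspan S k k,
          LinearMap.ker ((φ : A →ₗ[ℂ] ℂ) ∘ₗ LinearMap.mulLeft ℂ (star y))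

/-- `V¹_{k,r} = Span { S_μ x : |μ| = r, x ∈ W_k }`. -/
def V1 {A : Type*} [NormedRing A] [NormedAlgebra ℂ A] [StarRing A] {n : ℕ}
    (φ : A →L[ℂ] ℂ) (S : Fin n → A) (k r : ℕ) : Submodule ℂ A :=
  Submodule.span ℂ
    {a | ∃ μ : List (Fin n), ∃ x : A, μ.length = r ∧ x ∈ Wsub φ S k ∧
        a = wordProd S μ * x}

/-- `V²_{k,r} = Span { x S_γ⋆ : |γ| = r, x ∈ W_k }`. -/
def V2 {A : Type*} [NormedRing A] [NormedAlgebra ℂ A] [StarRing A] {n : ℕ}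
    (φ : A →L[ℂ] ℂ) (S : Fin n → A) (k r : ℕ) : Submodule ℂ A :=
  Submodule.span ℂ
    {a | ∃ γ : List (Fin n), ∃ x : A, γ.length = r ∧ x ∈ Wsub φ S k ∧
        a = x * star (wordProd S γ)}

/-- The family of subspaces `{W_k} ∪ {V¹_{l,r} : r ≥ 1} ∪ {V²_{p,s} : s ≥ 1}`. -/
def cuntzFiltrationFamily {A : Type*} [NormedRing A] [NormedAlgebra ℂ A] [StarRing A]
    {n : ℕ} (φ : A →L[ℂ] ℂ) (S : Fin n → A) : Set (Submodule ℂ A) :=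
  {U | (∃ k : ℕ, U = Wsub φ S k) ∨
       (∃ l r : ℕ, 1 ≤ r ∧ U = V1 φ S l r) ∨
       (∃ p s : ℕ, 1 ≤ s ∧ U = V2 φ S p s)}

section WordLemmas

variable {A : Type*} [Monoid A] {n : ℕ} (S : Fin n → A)

lemma wordProd_nil : wordProd S [] = 1 := rfl

lemma wordProd_cons (i : Fin n) (μ : List (Fin n)) :
    wordProd S (i :: μ) = S i * wordProd S μ := by
  simp [wordProd]

lemma wordProd_append (μ ν : List (Fin n)) :
    wordProd S (μ ++ ν) = wordProd S μ * wordProd S ν := by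
  simp [wordProd]

end WordLemmas

section StarWord

variable {A : Type*} [Ring A] [StarRing A] {n : ℕ} {S : Fin n → A}
  (hS1 : ∀ i, star (S i) * S i = 1)
  (horth : ∀ i j : Fin n, i ≠ j → star (S i) * S j = 0)

include hS1 in
lemma star_wordProd_mul_self (ν : List (Fin n)) :
    star (wordProd S ν) * wordProd S ν = 1 := by
  induction ν with
  | nil => simp [wordProd]
  | cons i ν ih =>
      rw [wordProd_cons, star_mul, mul_assoc, ← mul_assoc (star (S i)), hS1 i, one_mul, ih]

include hS1 in
lemma star_wordProd_mul_prefix (ν t : List (Fin n)) :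
    star (wordProd S ν) * wordProd S (ν ++ t) = wordProd S t := by
  rw [wordProd_append, ← mul_assoc, star_wordProd_mul_self hS1, one_mul]

include hS1 horth in
lemma star_wordProd_mul_of_not_prefix (ν μ : List (Fin n))
    (h1 : ¬ ν <+: μ) (h2 : ¬ μ <+: ν) :
    star (wordProd S ν) * wordProd S μ = 0 := by
  induction ν generalizing μ with
  | nil => exact absurd (List.nil_prefix) h1
  | cons i ν ih =>
      cases μ with
      | nil => exact absurd (List.nil_prefix) h2
      | cons j μ =>
          rw [wordProd_cons, wordProd_cons, star_mul, mul_assoc, ← mul_assoc (star (S i))]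
          by_cases hij : i = j
          · subst hij
            rw [hS1 i, one_mul]
            exact ih μ (fun h => h1 (List.cons_prefix_cons.2 ⟨rfl, h⟩))
              (fun h => h2 (List.cons_prefix_cons.2 ⟨rfl, h⟩))
          · rw [horth i j hij, zero_mul, mul_zero]

include hS1 horth in
lemma star_wordProd_mul_eq_length (ν μ : List (Fin n)) (h : ν.length = μ.length) :
    star (wordProd S ν) * wordProd S μ = if ν = μ then 1 else 0 := by
  by_cases hνμ : ν = μ
  · subst hνμ; simp [star_wordProd_mul_self hS1]
  · rw [if_neg hνμ]
    refine star_wordProd_mul_of_not_prefix hS1 horth ν μ (fun hp => ?_) (fun hp => ?_)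
    · exact hνμ (hp.eq_of_length h)
    · exact hνμ (hp.eq_of_length h.symm).symm

include hS1 horth in
/-- Product of two monomials. -/
lemma monomial_mul (μ ν α β : List (Fin n)) :
    (∃ t : List (Fin n), α = ν ++ t ∧
      wordProd S μ * star (wordProd S ν) * (wordProd S α * star (wordProd S β)) =
        wordProd S (μ ++ t) * star (wordProd S β)) ∨
    (∃ t : List (Fin n), ν = α ++ t ∧
      wordProd S μ * star (wordProd S ν) * (wordProd S α * star (wordProd S β)) =
        wordProd S μ * star (wordProd S (β ++ t))) ∨
    wordProd S μ * star (wordProd S ν) * (wordProd S α * star (wordProd S β)) = 0 := by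
  have key : wordProd S μ * star (wordProd S ν) * (wordProd S α * star (wordProd S β)) =
      wordProd S μ * (star (wordProd S ν) * wordProd S α) * star (wordProd S β) := by
    rw [mul_assoc, mul_assoc, mul_assoc]
  by_cases h1 : ν <+: α
  · obtain ⟨t, rfl⟩ := h1
    refine Or.inl ⟨t, rfl, ?_⟩
    rw [key, star_wordProd_mul_prefix hS1, wordProd_append, mul_assoc]
  · by_cases h2 : α <+: ν
    · obtain ⟨t, rfl⟩ := h2
      refine Or.inr (Or.inl ⟨t, rfl, ?_⟩)
      have h3 : star (wordProd S (α ++ t)) * wordProd S α = star (wordProd S t) := by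
        rw [wordProd_append, star_mul, mul_assoc, star_wordProd_mul_self hS1, mul_one]
      rw [key, h3, wordProd_append S β t, star_mul, mul_assoc]
    · refine Or.inr (Or.inr ?_)
      rw [key, star_wordProd_mul_of_not_prefix hS1 horth ν α h1 h2, mul_zero, zero_mul]

end StarWord
section PdSection

set_option linter.unusedSectionVars false

variable {A : Type*} [Ring A] [Algebra ℂ A] [StarRing A] [StarModule ℂ A] {n : ℕ}

/-- Span of monomials with length imbalance `d`. -/
def Pd (S : Fin n → A) (d : ℤ) : Submodule ℂ A :=
  Submodule.span ℂ
    {a | ∃ μ ν : List (Fin n), (μ.length : ℤ) - ν.length = d ∧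
        a = wordProd S μ * star (wordProd S ν)}

variable {S : Fin n → A}
  (hS1 : ∀ i, star (S i) * S i = 1)
  (horth : ∀ i j : Fin n, i ≠ j → star (S i) * S j = 0)

lemma Bspan_le_Pd (r s : ℕ) : Bspan S r s ≤ Pd S ((r : ℤ) - s) := by
  refine Submodule.span_le.2 ?_
  rintro a ⟨μ, ν, hμ, hν, rfl⟩
  exact Submodule.subset_span ⟨μ, ν, by omega, rfl⟩

lemma wordProd_mem_Pd (μ : List (Fin n)) : wordProd S μ ∈ Pd S (μ.length : ℤ) := by
  refine Submodule.subset_span ⟨μ, [], by simp, ?_⟩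
  simp [wordProd]

lemma star_mem_Pd {d : ℤ} {a : A} (ha : a ∈ Pd S d) : star a ∈ Pd S (-d) := by
  induction ha using Submodule.span_induction with
  | mem a h =>
      obtain ⟨μ, ν, hd, rfl⟩ := h
      rw [star_mul, star_star]
      exact Submodule.subset_span ⟨ν, μ, by omega, rfl⟩
  | zero => simpa using (Pd S (-d)).zero_mem
  | add x y _ _ hx hy => rw [star_add]; exact add_mem hx hy
  | smul c x _ hx => rw [star_smul]; exact Submodule.smul_mem _ _ hx

include hS1 horth in
lemma Pd_mul_le (d e : ℤ) : Pd S d * Pd S e ≤ Pd S (d + e) := by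
  rw [Pd, Pd, Submodule.span_mul_span, Submodule.span_le]
  rintro x ⟨a, ⟨μ, ν, hd, rfl⟩, b, ⟨α, β, he, rfl⟩, rfl⟩
  beta_reduce
  rcases monomial_mul hS1 horth μ ν α β with ⟨t, rfl, h⟩ | ⟨t, rfl, h⟩ | h
  · rw [h]
    refine Submodule.subset_span ⟨μ ++ t, β, ?_, rfl⟩
    simp only [List.length_append] at *
    omega
  · rw [h]
    refine Submodule.subset_span ⟨μ, β ++ t, ?_, rfl⟩
    simp only [List.length_append] at *
    omega
  · rw [h]; exact (Pd S (d + e)).zero_mem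

include hS1 horth in
lemma mul_mem_Pd {d e : ℤ} {a b : A} (ha : a ∈ Pd S d) (hb : b ∈ Pd S e) :
    a * b ∈ Pd S (d + e) :=
  Pd_mul_le hS1 horth d e (Submodule.mul_mem_mul ha hb)

end PdSection

section Compl

variable {A : Type*} [AddCommGroup A] [Module ℂ A]

lemma compl_decomp (B : A →ₗ[ℂ] A →ₗ[ℂ] ℂ) (E U : Submodule ℂ A) [FiniteDimensional ℂ E]
    (hUE : U ≤ E)
    (hnd : ∀ u ∈ U, (∀ v ∈ U, B v u = 0) → u = 0) :
    ∀ x ∈ E, ∃ y ∈ U, ∃ z ∈ E, (∀ v ∈ U, B v z = 0) ∧ x = y + z := by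
  haveI : FiniteDimensional ℂ U := Submodule.finiteDimensional_of_le hUE
  set W : Submodule ℂ A := E ⊓ (⨅ v : U, LinearMap.ker (B v)) with hW
  have hWE : W ≤ E := inf_le_left
  haveI : FiniteDimensional ℂ W := Submodule.finiteDimensional_of_le hWE
  have hWmem : ∀ x : A, x ∈ W ↔ x ∈ E ∧ ∀ v ∈ U, B v x = 0 := by
    intro x
    simp only [hW, Submodule.mem_inf, Submodule.mem_iInf, LinearMap.mem_ker]
    constructor
    · rintro ⟨h1, h2⟩; exact ⟨h1, fun v hv => h2 ⟨v, hv⟩⟩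
    · rintro ⟨h1, h2⟩; exact ⟨h1, fun v => h2 v v.2⟩
  set T : E →ₗ[ℂ] (U →ₗ[ℂ] ℂ) := (B.flip).domRestrict₁₂ E U with hT
  have hkerT : W = (LinearMap.ker T).map E.subtype := by
    ext x
    rw [hWmem]
    constructor
    · rintro ⟨h1, h2⟩
      refine ⟨⟨x, h1⟩, LinearMap.mem_ker.2 ?_, rfl⟩
      ext v
      exact h2 v v.2
    · rintro ⟨⟨x, hx⟩, hker, rfl⟩
      refine ⟨hx, fun v hv => ?_⟩
      have := congrFun (congrArg DFunLike.coe hker) ⟨v, hv⟩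
      exact this
  have hTinj : Function.Injective (T ∘ₗ Submodule.inclusion hUE) := by
    rw [← LinearMap.ker_eq_bot]
    rw [Submodule.eq_bot_iff]
    rintro ⟨u, hu⟩ hmem
    rw [LinearMap.mem_ker] at hmem
    have hu0 : u = 0 := by
      refine hnd u hu fun v hv => ?_
      have := congrFun (congrArg DFunLike.coe hmem) ⟨v, hv⟩
      exact this
    exact Subtype.ext hu0
  have hrange : Module.finrank ℂ (LinearMap.range T) = Module.finrank ℂ U := by
    refine le_antisymm ?_ ?_
    · have h1 := Submodule.finrank_le (LinearMap.range T)
      rwa [Subspace.dual_finrank_eq] at h1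
    · have h2 : LinearMap.range (T ∘ₗ Submodule.inclusion hUE) ≤ LinearMap.range T :=
        LinearMap.range_comp_le_range _ _
      have h3 := Submodule.finrank_mono h2
      rwa [LinearMap.finrank_range_of_inj hTinj] at h3
  have hrank := LinearMap.finrank_range_add_finrank_ker T
  have hWrank : Module.finrank ℂ W = Module.finrank ℂ (LinearMap.ker T) := by
    rw [hkerT]
    exact Submodule.finrank_map_subtype_eq E (LinearMap.ker T)
  have hUW : U ⊓ W = ⊥ := by
    rw [Submodule.eq_bot_iff]
    intro x hx
    rw [Submodule.mem_inf, hWmem] at hx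
    exact hnd x hx.1 hx.2.2
  have hsuprank : Module.finrank ℂ (U ⊔ W : Submodule ℂ A) = Module.finrank ℂ E := by
    have := Submodule.finrank_sup_add_finrank_inf_eq U W
    rw [hUW, finrank_bot] at this
    omega
  have hsup : U ⊔ W = E := by
    refine Submodule.eq_of_le_of_finrank_le (sup_le hUE hWE) ?_
    omega
  intro x hx
  rw [← hsup] at hx
  obtain ⟨y, hy, z, hz, rfl⟩ := Submodule.mem_sup.1 hx
  rw [hWmem] at hz
  exact ⟨y, hy, z, hz.1, hz.2, rfl⟩

end Compl
section Main

set_option linter.unusedSectionVars false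

variable {A : Type*} [NormedRing A] [StarRing A] [CStarRing A]
  [NormedAlgebra ℂ A] [StarModule ℂ A] [CompleteSpace A]
  {n : ℕ} {S : Fin n → A} {φ : A →L[ℂ] ℂ}

/-- Orthogonality of the ranges of the generating isometries. -/
lemma Sorth (hS1 : ∀ i, star (S i) * S i = 1) (hS2 : ∑ j, S j * star (S j) = 1)
    (hone : φ 1 = 1) (hpos : ∀ a : A, 0 ≤ φ (star a * a))
    (hfaithful : ∀ a : A, φ (star a * a) = 0 → a = 0) :
    ∀ i j : Fin n, i ≠ j → star (S i) * S j = 0 := by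
  intro i j hij
  have key : ∀ k : Fin n, φ (star (S i) * S k * (star (S k) * S i)) =
      φ (star (star (S k) * S i) * (star (S k) * S i)) := by
    intro k
    congr 1
    rw [star_mul, star_star, mul_assoc]
  have hsum : ∑ k : Fin n, star (S i) * S k * (star (S k) * S i) = 1 := by
    have : ∑ k : Fin n, star (S i) * S k * (star (S k) * S i)
        = star (S i) * (∑ k, S k * star (S k)) * S i := by
      rw [Finset.mul_sum, Finset.sum_mul]
      refine Finset.sum_congr rfl fun k _ => ?_
      noncomm_ring
    rw [this, hS2, mul_one, hS1]
  have hφsum : ∑ k : Fin n, φ (star (S i) * S k * (star (S k) * S i)) = 1 := by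
    rw [← map_sum, hsum, hone]
  have hterm_i : φ (star (S i) * S i * (star (S i) * S i)) = 1 := by
    rw [hS1, one_mul, hone]
  have hzero : ∑ k ∈ Finset.univ.erase i, φ (star (S i) * S k * (star (S k) * S i)) = 0 := by
    have := Finset.add_sum_erase Finset.univ
      (fun k => φ (star (S i) * S k * (star (S k) * S i))) (Finset.mem_univ i)
    beta_reduce at this
    rw [hφsum, hterm_i] at this
    linear_combination this
  have hj0 : φ (star (S i) * S j * (star (S j) * S i)) = 0 := by
    refine (Finset.sum_eq_zero_iff_of_nonneg ?_).1 hzero j (Finset.mem_erase.2 ⟨hij.symm, Finset.mem_univ j⟩)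
    intro k _
    rw [key k]
    exact hpos _
  have := hfaithful (star (S j) * S i) (by rw [← key j]; exact hj0)
  have h2 := congrArg star this
  rwa [star_mul, star_star, star_zero] at h2


variable (hφ : ∀ μ ν : List (Fin n),
      φ (wordProd S μ * star (wordProd S ν)) =
        if μ = ν then ((n : ℂ) ^ μ.length)⁻¹ else 0)

include hφ in
lemma phi_Pd_zero {d : ℤ} (hd : d ≠ 0) {a : A} (ha : a ∈ Pd S d) : φ a = 0 := by
  have hle : Pd S d ≤ LinearMap.ker (φ : A →ₗ[ℂ] ℂ) := by
    refine Submodule.span_le.2 ?_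
    rintro a ⟨μ, ν, hlen, rfl⟩
    have hμν : μ ≠ ν := by
      intro h; subst h; omega
    simp only [SetLike.mem_coe, LinearMap.mem_ker, ContinuousLinearMap.coe_coe]
    rw [hφ μ ν, if_neg hμν]
  exact hle ha

variable (hdense :
      (Submodule.span ℂ
        {a | ∃ μ ν : List (Fin n),
            a = wordProd S μ * star (wordProd S ν)}).topologicalClosure = ⊤)

include hφ hdense in
lemma phi_star (x : A) : φ (star x) = starRingEnd ℂ (φ x) := by
  let M : Submodule ℂ A :=
    { carrier := {x | φ (star x) = starRingEnd ℂ (φ x)}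
      add_mem' := by
        intro a b ha hb
        simp only [Set.mem_setOf_eq] at *
        rw [star_add, map_add, map_add, map_add, ha, hb]
      zero_mem' := by simp
      smul_mem' := by
        intro c x hx
        simp only [Set.mem_setOf_eq] at *
        rw [star_smul, map_smul, map_smul, smul_eq_mul, smul_eq_mul, map_mul, hx]
        rfl }
  have hMclosed : IsClosed (M : Set A) := by
    have : (M : Set A) = {x | φ (star x) = starRingEnd ℂ (φ x)} := rfl
    rw [this]
    exact isClosed_eq (φ.continuous.comp continuous_star)
      ((Complex.continuous_conj).comp φ.continuous)
  have hspan : Submodule.span ℂ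
      {a | ∃ μ ν : List (Fin n), a = wordProd S μ * star (wordProd S ν)} ≤ M := by
    refine Submodule.span_le.2 ?_
    rintro a ⟨μ, ν, rfl⟩
    show φ (star _) = starRingEnd ℂ (φ _)
    rw [star_mul, star_star, hφ ν μ, hφ μ ν]
    by_cases h : μ = ν
    · subst h
      simp
    · rw [if_neg h, if_neg (fun hh => h hh.symm), map_zero]
  have : (⊤ : Submodule ℂ A) ≤ M := by
    rw [← hdense]
    exact Submodule.topologicalClosure_minimal _ hspan hMclosed
  exact this Submodule.mem_top

include hφ hdense in
lemma phi_sandwich (γ δ : List (Fin n)) (hlen : γ.length = δ.length) (z : A) :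
    φ (wordProd S γ * z * star (wordProd S δ)) =
      (if γ = δ then ((n : ℂ) ^ γ.length)⁻¹ else 0) * φ z := by
  set c : ℂ := if γ = δ then ((n : ℂ) ^ γ.length)⁻¹ else 0 with hc
  let M : Submodule ℂ A :=
    { carrier := {z | φ (wordProd S γ * z * star (wordProd S δ)) = c * φ z}
      add_mem' := by
        intro a b ha hb
        simp only [Set.mem_setOf_eq] at *
        rw [mul_add, add_mul, map_add, map_add, ha, hb, mul_add]
      zero_mem' := by simp
      smul_mem' := by
        intro t x hx
        simp only [Set.mem_setOf_eq] at *
        rw [mul_smul_comm, smul_mul_assoc, map_smul, map_smul, hx, smul_eq_mul,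
          smul_eq_mul]
        ring }
  have hMclosed : IsClosed (M : Set A) := by
    have : (M : Set A) = {z | φ (wordProd S γ * z * star (wordProd S δ)) = c * φ z} := rfl
    rw [this]
    refine isClosed_eq ?_ (continuous_const.mul φ.continuous)
    exact φ.continuous.comp ((continuous_mul_left _).mul continuous_const)
  have hspan : Submodule.span ℂ
      {a | ∃ μ ν : List (Fin n), a = wordProd S μ * star (wordProd S ν)} ≤ M := by
    refine Submodule.span_le.2 ?_
    rintro a ⟨μ, ν, rfl⟩
    show φ _ = c * φ _
    have heq : wordProd S γ * (wordProd S μ * star (wordProd S ν)) * star (wordProd S δ) =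
        wordProd S (γ ++ μ) * star (wordProd S (δ ++ ν)) := by
      rw [wordProd_append, wordProd_append, star_mul]
      noncomm_ring
    rw [heq, hφ, hφ]
    by_cases hγδ : γ = δ
    · subst hγδ
      by_cases hμν : μ = ν
      · subst hμν
        rw [if_pos rfl, if_pos rfl, hc, if_pos rfl, List.length_append, pow_add, mul_inv]
      · rw [if_neg (fun h => hμν (List.append_cancel_left h)), if_neg hμν, mul_zero]
    · have h1 : γ ++ μ ≠ δ ++ ν := by
        intro h
        exact hγδ (List.append_inj_left h hlen)
      rw [if_neg h1, hc, if_neg hγδ, zero_mul]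
  have : (⊤ : Submodule ℂ A) ≤ M := by
    rw [← hdense]
    exact Submodule.topologicalClosure_minimal _ hspan hMclosed
  exact this Submodule.mem_top


lemma Wsub_zero_le : Wsub φ S 0 ≤ Bspan S 0 0 := by
  rw [Wsub, Submodule.span_le, Set.singleton_subset_iff]
  exact Submodule.subset_span ⟨[], [], rfl, rfl, by simp [wordProd]⟩

lemma Wsub_le_Bspan (k : ℕ) : Wsub φ S k ≤ Bspan S k k := by
  cases k with
  | zero => exact Wsub_zero_le
  | succ k => exact inf_le_left

lemma Bspan_succ_le (hS2 : ∑ j, S j * star (S j) = 1) (k : ℕ) :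
    Bspan S k k ≤ Bspan S (k + 1) (k + 1) := by
  refine Submodule.span_le.2 ?_
  rintro a ⟨μ, ν, hμ, hν, rfl⟩
  have heq : wordProd S μ * star (wordProd S ν) =
      ∑ j, wordProd S (μ ++ [j]) * star (wordProd S (ν ++ [j])) := by
    have : ∀ j : Fin n, wordProd S (μ ++ [j]) * star (wordProd S (ν ++ [j])) =
        wordProd S μ * (S j * star (S j)) * star (wordProd S ν) := by
      intro j
      rw [wordProd_append, wordProd_append, star_mul]
      simp only [wordProd, List.map_cons, List.map_nil, List.prod_cons, List.prod_nil,
        mul_one]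
      noncomm_ring
    rw [Finset.sum_congr rfl fun j _ => this j, ← Finset.sum_mul, ← Finset.mul_sum, hS2,
      mul_one]
  rw [heq]
  exact Submodule.sum_mem _ fun j _ => Submodule.subset_span
    ⟨μ ++ [j], ν ++ [j], by simp [hμ], by simp [hν], rfl⟩

lemma Bspan_mono (hS2 : ∑ j, S j * star (S j) = 1) {k l : ℕ} (hkl : k ≤ l) :
    Bspan S k k ≤ Bspan S l l := by
  induction l with
  | zero => simpa [Nat.le_zero.1 hkl] using le_rfl
  | succ l ih =>
      rcases Nat.lt_or_ge k (l + 1) with h | h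
      · exact (ih (by omega)).trans (Bspan_succ_le hS2 l)
      · have : k = l + 1 := by omega
        subst this; exact le_rfl

lemma Wsub_orth_lt (hS2 : ∑ j, S j * star (S j) = 1) {k l : ℕ} (hkl : k < l) :
    ∀ a ∈ Wsub φ S k, ∀ b ∈ Wsub φ S l, φ (star a * b) = 0 := by
  intro a ha b hb
  obtain ⟨l, rfl⟩ : ∃ l', l = l' + 1 := ⟨l - 1, by omega⟩
  rw [Wsub, Submodule.mem_inf] at hb
  have hb2 := hb.2
  have haF : a ∈ Bspan S l l :=
    Bspan_mono hS2 (by omega) (Wsub_le_Bspan k ha)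
  have := Submodule.mem_iInf _ |>.1 hb2 a
  have := Submodule.mem_iInf _ |>.1 this haF
  simpa using this

variable (hφ : ∀ μ ν : List (Fin n),
      φ (wordProd S μ * star (wordProd S ν)) =
        if μ = ν then ((n : ℂ) ^ μ.length)⁻¹ else 0)
  (hdense :
      (Submodule.span ℂ
        {a | ∃ μ ν : List (Fin n),
            a = wordProd S μ * star (wordProd S ν)}).topologicalClosure = ⊤)

include hφ hdense in
lemma Wsub_orth (hS2 : ∑ j, S j * star (S j) = 1) {k l : ℕ} (hkl : k ≠ l) :
    ∀ a ∈ Wsub φ S k, ∀ b ∈ Wsub φ S l, φ (star a * b) = 0 := by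
  intro a ha b hb
  rcases Nat.lt_or_ge k l with h | h
  · exact Wsub_orth_lt hS2 h a ha b hb
  · have hlk : l < k := by omega
    have h0 : φ (star b * a) = 0 := Wsub_orth_lt hS2 hlk b hb a ha
    have := phi_star hφ hdense (star b * a)
    rw [star_mul, star_star, h0, map_zero] at this
    exact this

lemma Wsub_le_Pd (k : ℕ) : Wsub φ S k ≤ Pd S 0 := by
  have := (Wsub_le_Bspan (φ := φ) (S := S) k).trans (Bspan_le_Pd k k)
  simpa using this

variable (hS1 : ∀ i, star (S i) * S i = 1)
  (horth : ∀ i j : Fin n, i ≠ j → star (S i) * S j = 0)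

include hS1 horth in
lemma V1_le_Pd (k r : ℕ) : V1 φ S k r ≤ Pd S (r : ℤ) := by
  refine Submodule.span_le.2 ?_
  rintro a ⟨μ, x, hμ, hx, rfl⟩
  have h1 : wordProd S μ ∈ Pd S (r : ℤ) := hμ ▸ wordProd_mem_Pd μ
  have h2 : x ∈ Pd S 0 := Wsub_le_Pd k hx
  simpa using mul_mem_Pd hS1 horth h1 h2


include hS1 horth in
lemma V2_le_Pd (k s : ℕ) : V2 φ S k s ≤ Pd S (-(s : ℤ)) := by
  refine Submodule.span_le.2 ?_
  rintro a ⟨γ, x, hγ, hx, rfl⟩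
  have h1 : star (wordProd S γ) ∈ Pd S (-(s : ℤ)) := by
    have := star_mem_Pd (wordProd_mem_Pd (S := S) γ)
    rwa [hγ] at this
  have h2 : x ∈ Pd S 0 := Wsub_le_Pd k hx
  simpa using mul_mem_Pd hS1 horth h2 h1

include hS1 horth hφ in
lemma Pd_orth {d e : ℤ} (hde : d ≠ e) {a b : A} (ha : a ∈ Pd S d) (hb : b ∈ Pd S e) :
    φ (star a * b) = 0 := by
  have : star a * b ∈ Pd S (-d + e) := mul_mem_Pd hS1 horth (star_mem_Pd ha) hb
  exact phi_Pd_zero hφ (by omega) this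

include hS1 horth hφ hdense in
lemma V1_orth_same (hS2 : ∑ j, S j * star (S j) = 1) {l l' r : ℕ} (hll : l ≠ l') :
    ∀ a ∈ V1 φ S l r, ∀ b ∈ V1 φ S l' r, φ (star a * b) = 0 := by
  intro a ha
  induction ha using Submodule.span_induction with
  | mem a hmem =>
      obtain ⟨μ, x, hμ, hx, rfl⟩ := hmem
      intro b hb
      induction hb using Submodule.span_induction with
      | mem b hmemb =>
          obtain ⟨ν, y, hν, hy, rfl⟩ := hmemb
          have key : star (wordProd S μ * x) * (wordProd S ν * y) =
              star x * (star (wordProd S μ) * wordProd S ν) * y := by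
            rw [star_mul]; noncomm_ring
          rw [key, star_wordProd_mul_eq_length hS1 horth μ ν (by omega)]
          by_cases hμν : μ = ν
          · rw [if_pos hμν, mul_one]
            exact Wsub_orth hφ hdense hS2 hll x hx y hy
          · rw [if_neg hμν, mul_zero, zero_mul, map_zero]
      | zero => simp
      | add u v hu hv ihu ihv => rw [mul_add, map_add, ihu, ihv, add_zero]
      | smul c u hu ihu => rw [mul_smul_comm, map_smul, ihu, smul_zero]
  | zero => intro b hb; simp
  | add u v hu hv ihu ihv =>
      intro b hb
      rw [star_add, add_mul, map_add, ihu b hb, ihv b hb, add_zero]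
  | smul c u hu ihu =>
      intro b hb
      rw [star_smul, smul_mul_assoc, map_smul, ihu b hb, smul_zero]

include hS1 horth hφ hdense in
lemma V2_orth_same (hS2 : ∑ j, S j * star (S j) = 1) {p p' s : ℕ} (hpp : p ≠ p') :
    ∀ a ∈ V2 φ S p s, ∀ b ∈ V2 φ S p' s, φ (star a * b) = 0 := by
  intro a ha
  induction ha using Submodule.span_induction with
  | mem a hmem =>
      obtain ⟨γ, x, hγ, hx, rfl⟩ := hmem
      intro b hb
      induction hb using Submodule.span_induction with
      | mem b hmemb =>
          obtain ⟨δ, y, hδ, hy, rfl⟩ := hmemb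
          have key : star (x * star (wordProd S γ)) * (y * star (wordProd S δ)) =
              wordProd S γ * (star x * y) * star (wordProd S δ) := by
            rw [star_mul, star_star]; noncomm_ring
          rw [key, phi_sandwich hφ hdense γ δ (by omega),
            Wsub_orth hφ hdense hS2 hpp x hx y hy, mul_zero]
      | zero => simp
      | add u v hu hv ihu ihv => rw [mul_add, map_add, ihu, ihv, add_zero]
      | smul c u hu ihu => rw [mul_smul_comm, map_smul, ihu, smul_zero]
  | zero => intro b hb; simp
  | add u v hu hv ihu ihv =>
      intro b hb
      rw [star_add, add_mul, map_add, ihu b hb, ihv b hb, add_zero]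
  | smul c u hu ihu =>
      intro b hb
      rw [star_smul, smul_mul_assoc, map_smul, ihu b hb, smul_zero]

lemma Bspan_fd (r s : ℕ) : FiniteDimensional ℂ (Bspan S r s) := by
  apply FiniteDimensional.span_of_finite
  have hsub : {a : A | ∃ μ ν : List (Fin n), μ.length = r ∧ ν.length = s ∧
      a = wordProd S μ * star (wordProd S ν)} ⊆
      (fun p : List (Fin n) × List (Fin n) =>
        wordProd S p.1 * star (wordProd S p.2)) ''
        ({μ : List (Fin n) | μ.length = r} ×ˢ {ν : List (Fin n) | ν.length = s}) := by
    rintro a ⟨μ, ν, hμ, hν, rfl⟩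
    exact ⟨(μ, ν), ⟨hμ, hν⟩, rfl⟩
  exact Set.Finite.subset
    (Set.Finite.image _ ((List.finite_length_eq _ r).prod (List.finite_length_eq _ s))) hsub

lemma Wsub_fd (k : ℕ) : FiniteDimensional ℂ (Wsub φ S k) := by
  haveI := Bspan_fd (S := S) k k
  exact Submodule.finiteDimensional_of_le (Wsub_le_Bspan k)

lemma mulLeft_Bspan {μ : List (Fin n)} {k l : ℕ} {x : A} (hx : x ∈ Bspan S k l) :
    wordProd S μ * x ∈ Bspan S (μ.length + k) l := by
  induction hx using Submodule.span_induction with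
  | mem a hmem =>
      obtain ⟨α, β, hα, hβ, rfl⟩ := hmem
      rw [← mul_assoc, ← wordProd_append]
      exact Submodule.subset_span ⟨μ ++ α, β, by simp [hα], hβ, rfl⟩
  | zero => rw [mul_zero]; exact Submodule.zero_mem _
  | add u v _ _ ihu ihv => rw [mul_add]; exact Submodule.add_mem _ ihu ihv
  | smul c u _ ihu => rw [mul_smul_comm]; exact Submodule.smul_mem _ _ ihu

lemma mulRight_Bspan {γ : List (Fin n)} {k l : ℕ} {x : A} (hx : x ∈ Bspan S k l) :
    x * star (wordProd S γ) ∈ Bspan S k (l + γ.length) := by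
  induction hx using Submodule.span_induction with
  | mem a hmem =>
      obtain ⟨α, β, hα, hβ, rfl⟩ := hmem
      have : wordProd S α * star (wordProd S β) * star (wordProd S γ) =
          wordProd S α * star (wordProd S (γ ++ β)) := by
        rw [wordProd_append, star_mul, mul_assoc]
      rw [this]
      exact Submodule.subset_span ⟨α, γ ++ β, hα, by simp [hβ, Nat.add_comm], rfl⟩
  | zero => rw [zero_mul]; exact Submodule.zero_mem _
  | add u v _ _ ihu ihv => rw [add_mul]; exact Submodule.add_mem _ ihu ihv
  | smul c u _ ihu => rw [smul_mul_assoc]; exact Submodule.smul_mem _ _ ihu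

lemma V1_le_Bspan (k r : ℕ) : V1 φ S k r ≤ Bspan S (r + k) k := by
  refine Submodule.span_le.2 ?_
  rintro a ⟨μ, x, hμ, hx, rfl⟩
  have := mulLeft_Bspan (μ := μ) (Wsub_le_Bspan k hx)
  rwa [hμ] at this

lemma V2_le_Bspan (k s : ℕ) : V2 φ S k s ≤ Bspan S k (k + s) := by
  refine Submodule.span_le.2 ?_
  rintro a ⟨γ, x, hγ, hx, rfl⟩
  have := mulRight_Bspan (γ := γ) (Wsub_le_Bspan k hx)
  rwa [hγ] at this

lemma V1_fd (k r : ℕ) : FiniteDimensional ℂ (V1 φ S k r) := by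
  haveI := Bspan_fd (S := S) (r + k) k
  exact Submodule.finiteDimensional_of_le (V1_le_Bspan k r)

lemma V2_fd (k s : ℕ) : FiniteDimensional ℂ (V2 φ S k s) := by
  haveI := Bspan_fd (S := S) k (k + s)
  exact Submodule.finiteDimensional_of_le (V2_le_Bspan k s)

lemma Bspan_star {k l : ℕ} {x : A} (hx : x ∈ Bspan S k l) : star x ∈ Bspan S l k := by
  induction hx using Submodule.span_induction with
  | mem a hmem =>
      obtain ⟨μ, ν, hμ, hν, rfl⟩ := hmem
      rw [star_mul, star_star]
      exact Submodule.subset_span ⟨ν, μ, hν, hμ, rfl⟩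
  | zero => rw [star_zero]; exact Submodule.zero_mem _
  | add u v _ _ ihu ihv => rw [star_add]; exact Submodule.add_mem _ ihu ihv
  | smul c u _ ihu => rw [star_smul]; exact Submodule.smul_mem _ _ ihu

lemma Bspan_le_iSup_Wsub
    (hfaithful : ∀ a : A, φ (star a * a) = 0 → a = 0)
    (hS2 : ∑ j, S j * star (S j) = 1) :
    ∀ k : ℕ, Bspan S k k ≤ ⨆ j ∈ Finset.range (k + 1), Wsub φ S j := by
  intro k
  induction k with
  | zero =>
      have h0 : Bspan S 0 0 ≤ Wsub φ S 0 := by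
        refine Submodule.span_le.2 ?_
        rintro a ⟨μ, ν, hμ, hν, rfl⟩
        rw [List.length_eq_zero_iff.1 hμ, List.length_eq_zero_iff.1 hν]
        rw [Wsub]
        refine Submodule.subset_span ?_
        simp [wordProd]
      exact h0.trans (le_iSup₂ (f := fun j _ => Wsub φ S j) 0 (by simp))
  | succ k ih =>
      intro x hx
      set Bphi : A →ₗ[ℂ] A →ₗ[ℂ] ℂ := (LinearMap.mul ℂ A).compr₂ (φ : A →ₗ[ℂ] ℂ) with hB
      haveI := Bspan_fd (S := S) (k + 1) (k + 1)
      have hnd : ∀ u ∈ Bspan S k k, (∀ v ∈ Bspan S k k, Bphi v u = 0) → u = 0 := by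
        intro u hu h
        refine hfaithful u ?_
        have := h (star u) (Bspan_star hu)
        simpa [hB] using this
      obtain ⟨y, hy, z, hz, hzorth, rfl⟩ :=
        compl_decomp Bphi (Bspan S (k + 1) (k + 1)) (Bspan S k k)
          (Bspan_succ_le hS2 k) hnd x hx
      refine Submodule.add_mem _ ?_ ?_
      · have hmono : (⨆ j ∈ Finset.range (k + 1), Wsub φ S j) ≤
            ⨆ j ∈ Finset.range (k + 1 + 1), Wsub φ S j :=
          biSup_mono fun j hj => by
            simp only [Finset.mem_range] at *; omega
        exact hmono (ih hy)
      · have hzW : z ∈ Wsub φ S (k + 1) := by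
          rw [Wsub, Submodule.mem_inf]
          refine ⟨hz, ?_⟩
          rw [Submodule.mem_iInf]
          intro y'
          rw [Submodule.mem_iInf]
          intro hy'
          have := hzorth (star y') (Bspan_star hy')
          simpa [hB] using this
        exact le_iSup₂ (f := fun j _ => Wsub φ S j) (k + 1) (by simp) hzW


lemma mem_family_le_SU {U : Submodule ℂ A} (hU : U ∈ cuntzFiltrationFamily φ S) :
    U ≤ Submodule.span ℂ (⋃ V ∈ cuntzFiltrationFamily φ S, (V : Set A)) := fun x hx =>
  Submodule.subset_span (Set.mem_biUnion hU hx)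

lemma monomial_mem_SU
    (hfaithful : ∀ a : A, φ (star a * a) = 0 → a = 0)
    (hS2 : ∑ j, S j * star (S j) = 1) (μ ν : List (Fin n)) :
    wordProd S μ * star (wordProd S ν) ∈
      Submodule.span ℂ (⋃ V ∈ cuntzFiltrationFamily φ S, (V : Set A)) := by
  set SU := Submodule.span ℂ (⋃ V ∈ cuntzFiltrationFamily φ S, (V : Set A)) with hSU
  have hW : ∀ k, Wsub φ S k ≤ SU := fun k => mem_family_le_SU (Or.inl ⟨k, rfl⟩)
  have hBle : ∀ k, Bspan S k k ≤ SU := fun k =>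
    (Bspan_le_iSup_Wsub hfaithful hS2 k).trans (iSup₂_le fun j _ => hW j)
  rcases lt_trichotomy μ.length ν.length with h | h | h
  · -- ν longer : use V2
    set ν₁ := ν.take (ν.length - μ.length) with hν₁
    set ν₂ := ν.drop (ν.length - μ.length) with hν₂
    have hx : wordProd S μ * star (wordProd S ν₂) ∈ Bspan S μ.length μ.length :=
      Submodule.subset_span ⟨μ, ν₂, rfl, by simp [hν₂]; omega, rfl⟩
    have key : ∀ x ∈ Bspan S μ.length μ.length, x * star (wordProd S ν₁) ∈ SU := by
      intro x hx
      have hle : Bspan S μ.length μ.length ≤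
          Submodule.comap (LinearMap.mulRight ℂ (star (wordProd S ν₁))) SU := by
        refine (Bspan_le_iSup_Wsub hfaithful hS2 μ.length).trans
          (iSup₂_le fun j _ => fun w hw => ?_)
        have : w * star (wordProd S ν₁) ∈ V2 φ S j ν₁.length :=
          Submodule.subset_span ⟨ν₁, w, rfl, hw, rfl⟩
        refine mem_family_le_SU (Or.inr (Or.inr ⟨j, ν₁.length, ?_, rfl⟩)) this
        simp [hν₁]
        omega
      exact hle hx
    have heq : wordProd S μ * star (wordProd S ν) =
        (wordProd S μ * star (wordProd S ν₂)) * star (wordProd S ν₁) := by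
      conv_lhs => rw [← List.take_append_drop (ν.length - μ.length) ν]
      rw [← hν₁, ← hν₂, wordProd_append, star_mul, ← mul_assoc]
    rw [heq]
    exact key _ hx
  · exact hBle μ.length (Submodule.subset_span ⟨μ, ν, rfl, h.symm, rfl⟩)
  · -- μ longer : use V1
    set μ₁ := μ.take (μ.length - ν.length) with hμ₁
    set μ₂ := μ.drop (μ.length - ν.length) with hμ₂
    have hx : wordProd S μ₂ * star (wordProd S ν) ∈ Bspan S ν.length ν.length :=
      Submodule.subset_span ⟨μ₂, ν, by simp [hμ₂]; omega, rfl, rfl⟩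
    have key : ∀ x ∈ Bspan S ν.length ν.length, wordProd S μ₁ * x ∈ SU := by
      intro x hx
      have hle : Bspan S ν.length ν.length ≤
          Submodule.comap (LinearMap.mulLeft ℂ (wordProd S μ₁)) SU := by
        refine (Bspan_le_iSup_Wsub hfaithful hS2 ν.length).trans
          (iSup₂_le fun j _ => fun w hw => ?_)
        have : wordProd S μ₁ * w ∈ V1 φ S j μ₁.length :=
          Submodule.subset_span ⟨μ₁, w, rfl, hw, rfl⟩
        refine mem_family_le_SU (Or.inr (Or.inl ⟨j, μ₁.length, ?_, rfl⟩)) this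
        simp [hμ₁]
        omega
      exact hle hx
    have heq : wordProd S μ * star (wordProd S ν) =
        wordProd S μ₁ * (wordProd S μ₂ * star (wordProd S ν)) := by
      conv_lhs => rw [← List.take_append_drop (μ.length - ν.length) μ]
      rw [← hμ₁, ← hμ₂, wordProd_append, mul_assoc]
    rw [heq]
    exact key _ hx

end Main
/-- If moreover `φ` is a faithful state, then
`(φ, (W_k, V¹_{l,r}, V²_{p,s}))` is an orthogonal filtration of `A`:
(i) `W_0 = ℂ·1`; (ii) each subspace in the family is finite dimensional;
(iii) any two distinct subspaces of the family are φ-orthogonal;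
(iv) the linear span of their union is dense in `A`. -/
theorem cuntz_orthogonal_filtration
    {A : Type*} [NormedRing A] [StarRing A] [CStarRing A]
    [NormedAlgebra ℂ A] [StarModule ℂ A] [CompleteSpace A]
    {n : ℕ} (hn : 2 ≤ n) (S : Fin n → A)
    (hS1 : ∀ i, star (S i) * S i = 1)
    (hS2 : ∑ j, S j * star (S j) = 1)
    (hdense :
      (Submodule.span ℂ
        {a | ∃ μ ν : List (Fin n),
            a = wordProd S μ * star (wordProd S ν)}).topologicalClosure = ⊤)
    (φ : A →L[ℂ] ℂ)
    (hφ : ∀ μ ν : List (Fin n),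
      φ (wordProd S μ * star (wordProd S ν)) =
        if μ = ν then ((n : ℂ) ^ μ.length)⁻¹ else 0)
    (hone : φ 1 = 1)
    (hpos : ∀ a : A, 0 ≤ φ (star a * a))
    (hfaithful : ∀ a : A, φ (star a * a) = 0 → a = 0) :
    Wsub φ S 0 = Submodule.span ℂ {(1 : A)} ∧
    (∀ U ∈ cuntzFiltrationFamily φ S, FiniteDimensional ℂ U) ∧
    (∀ U ∈ cuntzFiltrationFamily φ S, ∀ U' ∈ cuntzFiltrationFamily φ S,
        U ≠ U' → ∀ a ∈ U, ∀ b ∈ U', φ (star a * b) = 0) ∧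
    (Submodule.span ℂ
        (⋃ U ∈ cuntzFiltrationFamily φ S, (U : Set A))).topologicalClosure = ⊤ := by
  classical
  have horth : ∀ i j : Fin n, i ≠ j → star (S i) * S j = 0 :=
    Sorth hS1 hS2 hone hpos hfaithful
  refine ⟨rfl, ?_, ?_, ?_⟩
  · rintro U (⟨k, rfl⟩ | ⟨l, r, hr, rfl⟩ | ⟨p, s, hs, rfl⟩)
    · exact Wsub_fd k
    · exact V1_fd l r
    · exact V2_fd p s
  · rintro U hU U' hU' hne a ha b hb
    rcases hU with ⟨k, rfl⟩ | ⟨l, r, hr, rfl⟩ | ⟨p, s, hs, rfl⟩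
    · rcases hU' with ⟨k', rfl⟩ | ⟨l', r', hr', rfl⟩ | ⟨p', s', hs', rfl⟩
      · by_cases hkk : k = k'
        · exact absurd (congrArg (Wsub φ S) hkk) hne
        · exact Wsub_orth (hφ := hφ) (hdense := hdense) hS2 hkk a ha b hb
      · exact Pd_orth (hφ := hφ) (hS1 := hS1) (horth := horth)
          (show (0 : ℤ) ≠ (r' : ℤ) by omega) (Wsub_le_Pd k ha)
          (V1_le_Pd (hS1 := hS1) (horth := horth) l' r' hb)
      · exact Pd_orth (hφ := hφ) (hS1 := hS1) (horth := horth)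
          (show (0 : ℤ) ≠ (-(s' : ℤ)) by omega) (Wsub_le_Pd k ha)
          (V2_le_Pd (hS1 := hS1) (horth := horth) p' s' hb)
    · rcases hU' with ⟨k', rfl⟩ | ⟨l', r', hr', rfl⟩ | ⟨p', s', hs', rfl⟩
      · exact Pd_orth (hφ := hφ) (hS1 := hS1) (horth := horth)
          (show ((r : ℕ) : ℤ) ≠ (0 : ℤ) by omega)
          (V1_le_Pd (hS1 := hS1) (horth := horth) l r ha) (Wsub_le_Pd k' hb)
      · by_cases hrr : r = r'
        · subst hrr
          by_cases hll : l = l'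
          · exact absurd (by rw [hll]) hne
          · exact V1_orth_same (hφ := hφ) (hdense := hdense) (hS1 := hS1)
              (horth := horth) hS2 hll a ha b hb
        · exact Pd_orth (hφ := hφ) (hS1 := hS1) (horth := horth)
            (show ((r : ℕ) : ℤ) ≠ ((r' : ℕ) : ℤ) by omega)
            (V1_le_Pd (hS1 := hS1) (horth := horth) l r ha)
            (V1_le_Pd (hS1 := hS1) (horth := horth) l' r' hb)
      · exact Pd_orth (hφ := hφ) (hS1 := hS1) (horth := horth)
          (show ((r : ℕ) : ℤ) ≠ (-(s' : ℤ)) by omega)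
          (V1_le_Pd (hS1 := hS1) (horth := horth) l r ha)
          (V2_le_Pd (hS1 := hS1) (horth := horth) p' s' hb)
    · rcases hU' with ⟨k', rfl⟩ | ⟨l', r', hr', rfl⟩ | ⟨p', s', hs', rfl⟩
      · exact Pd_orth (hφ := hφ) (hS1 := hS1) (horth := horth)
          (show (-(s : ℤ)) ≠ (0 : ℤ) by omega)
          (V2_le_Pd (hS1 := hS1) (horth := horth) p s ha) (Wsub_le_Pd k' hb)
      · exact Pd_orth (hφ := hφ) (hS1 := hS1) (horth := horth)
          (show (-(s : ℤ)) ≠ ((r' : ℕ) : ℤ) by omega)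
          (V2_le_Pd (hS1 := hS1) (horth := horth) p s ha)
          (V1_le_Pd (hS1 := hS1) (horth := horth) l' r' hb)
      · by_cases hss : s = s'
        · subst hss
          by_cases hpp : p = p'
          · exact absurd (by rw [hpp]) hne
          · exact V2_orth_same (hφ := hφ) (hdense := hdense) (hS1 := hS1)
              (horth := horth) hS2 hpp a ha b hb
        · exact Pd_orth (hφ := hφ) (hS1 := hS1) (horth := horth)
            (show (-(s : ℤ)) ≠ (-(s' : ℤ)) by omega)
            (V2_le_Pd (hS1 := hS1) (horth := horth) p s ha)
            (V2_le_Pd (hS1 := hS1) (horth := horth) p' s' hb)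
  · refine top_unique ?_
    rw [← hdense]
    refine Submodule.topologicalClosure_mono ?_
    refine Submodule.span_le.2 ?_
    rintro a ⟨μ, ν, rfl⟩
    exact monomial_mem_SU hfaithful hS2 μ ν
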